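/- There is a constant C, depending only on η₀, such that for every A ∈ ℝ and every finite set E of positive integers, |Σ_{j₁∈E} 2^{−j₁} ∫_0^∞ sin(Aσ) · χ_{1,j₁}(σ) dσ| ≤ C. -/

import Mathlib

/- STATEMENT 9: uniform bound for sums of dyadic sine integrals (estimate (4.10)). -/

open MeasureTheory Polynomial

noncomputable section

/-- `β(t) = (1 + t²/4)^(1/2)`. -/
def bet (t : ℝ) : ℝ := Real.sqrt (1 + t ^ 2 / 4)

/-- The phase `Ψ(x,y) = (x₁−y₁)(x₂²+y₂²) − (x₂−y₂)·p(x₁+y₁)`. -/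
def Psi (p : Polynomial ℝ) (x y : ℝ × ℝ) : ℝ :=
  (x.1 - y.1) * (x.2 ^ 2 + y.2 ^ 2) - (x.2 - y.2) * p.eval (x.1 + y.1)

/-- `θ(x,y) = β(x₁−y₁)·|x₂+y₂+p′(x₁+y₁)|·(x₂−y₂)`. -/
def theta (p : Polynomial ℝ) (x y : ℝ × ℝ) : ℝ :=
  bet (x.1 - y.1) * |x.2 + y.2 + p.derivative.eval (x.1 + y.1)| * (x.2 - y.2)

/-- `sin θ(x,y)/(x₂−y₂)`, extended continuously across `x₂ = y₂`. -/
def sinq (p : Polynomial ℝ) (x y : ℝ × ℝ) : ℝ :=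
  if x.2 = y.2 then bet (x.1 - y.1) * |x.2 + y.2 + p.derivative.eval (x.1 + y.1)|
  else Real.sin (theta p x y) / (x.2 - y.2)

/-- `g` has only finitely many sign changes: there is a uniform bound `N` on the length of
increasing chains of points at which `g` changes sign between consecutive points. -/
def FinSignChanges (g : ℝ → ℝ) : Prop :=
  ∃ N : ℕ, ∀ s : ℕ → ℝ, StrictMono s →
    ∀ m : ℕ, (∀ i < m, g (s i) * g (s (i + 1)) < 0) → m ≤ N

/-- The standing hypotheses on the cut-off function `η₀`: smooth, even, `[0,1]`-valued,
`≡ 1` on `{|s| ≤ 1/2}`, `≡ 0` on `{|s| ≥ 3/4}`, and `η₀′` has finitely many sign changes. -/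
structure CutoffFun (η₀ : ℝ → ℝ) : Prop where
  smooth : ContDiff ℝ (⊤ : ℕ∞) η₀
  even : ∀ s, η₀ (-s) = η₀ s
  mem01 : ∀ s, η₀ s ∈ Set.Icc (0 : ℝ) 1
  eq_one : ∀ s, |s| ≤ 1 / 2 → η₀ s = 1
  eq_zero : ∀ s, 3 / 4 ≤ |s| → η₀ s = 0
  signChanges : FinSignChanges (deriv η₀)

/-- `η(s) = η₀(s/2) − η₀(s)`. -/
def etad (η₀ : ℝ → ℝ) (s : ℝ) : ℝ := η₀ (s / 2) - η₀ s

/-- `χ_{1,j₁}(s) = 2^{j₁}·η(2^{−j₁}s)/β(s)`. -/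
def chi1 (η₀ : ℝ → ℝ) (j₁ : ℤ) (s : ℝ) : ℝ :=
  (2 : ℝ) ^ j₁ * etad η₀ ((2 : ℝ) ^ (-j₁) * s) / bet s

/-- `χ_{2,j₂}(s) = 2^{j₂}·η(2^{−j₂}s)/s`. -/
def chi2 (η₀ : ℝ → ℝ) (j₂ : ℤ) (s : ℝ) : ℝ :=
  (2 : ℝ) ^ j₂ * etad η₀ ((2 : ℝ) ^ (-j₂) * s) / s

/-- The kernel `T_j(x,y) = 2^{−j₁−j₂}·χ_j(x−y)·e^{iγΨ(x,y)}·sin θ(x,y)`. -/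
def Tker (η₀ : ℝ → ℝ) (p : Polynomial ℝ) (γ : ℝ) (j : ℤ × ℤ) (x y : ℝ × ℝ) : ℂ :=
  ((2 : ℝ) ^ (-j.1 - j.2) * chi1 η₀ j.1 (x.1 - y.1) * chi2 η₀ j.2 (x.2 - y.2) *
      Real.sin (theta p x y) : ℝ) * Complex.exp (Complex.I * (γ * Psi p x y : ℝ))


lemma bet_pos (t : ℝ) : 0 < bet t := Real.sqrt_pos.2 (by positivity)

lemma one_le_bet (t : ℝ) : 1 ≤ bet t := by
  rw [show (1:ℝ) = Real.sqrt 1 by simp [Real.sqrt_one]]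
  exact Real.sqrt_le_sqrt (by nlinarith [sq_nonneg t])

lemma half_abs_le_bet (t : ℝ) : |t| / 2 ≤ bet t := by
  have : |t|/2 = Real.sqrt (t^2/4) := by
    rw [show t^2/4 = (|t|/2)^2 by rw [div_pow, sq_abs]; norm_num, Real.sqrt_sq (by positivity)]
  rw [this]
  exact Real.sqrt_le_sqrt (by linarith)

lemma hasDerivAt_bet (t : ℝ) : HasDerivAt bet (t / (4 * bet t)) t := by
  have h1 : HasDerivAt (fun t : ℝ => 1 + t ^ 2 / 4) (t / 2) t := by
    have := ((hasDerivAt_pow 2 t).div_const 4).const_add 1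
    simpa using this.congr_deriv (by ring)
  have h2 : HasDerivAt Real.sqrt (1 / (2 * Real.sqrt (1 + t^2/4))) (1 + t^2/4) :=
    Real.hasDerivAt_sqrt (by positivity)
  have := h2.comp t h1
  refine HasDerivAt.congr_deriv this ?_
  unfold bet; field_simp; ring

lemma continuous_bet : Continuous bet := by
  unfold bet; fun_prop

lemma abs_betderiv_le (t : ℝ) : |t / (4 * bet t)| ≤ 1 / 2 := by
  have hb := bet_pos t
  have h := half_abs_le_bet t
  rw [abs_div, abs_of_pos (by positivity : (0:ℝ) < 4 * bet t), div_le_iff₀ (by positivity)]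
  nlinarith [abs_nonneg t]

lemma abs_etad_le {η₀ : ℝ → ℝ} (hη : CutoffFun η₀) (s : ℝ) : |etad η₀ s| ≤ 1 := by
  have h1 := hη.mem01 (s/2); have h2 := hη.mem01 s
  simp only [Set.mem_Icc] at h1 h2
  rw [abs_le]; unfold etad; constructor <;> linarith

lemma etad_eq_zero_small {η₀ : ℝ → ℝ} (hη : CutoffFun η₀) {s : ℝ} (h : |s| ≤ 1/2) :
    etad η₀ s = 0 := by
  have h1 := hη.eq_one (s/2) (by rw [abs_div]; simp only [abs_two]; linarith [abs_nonneg s])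
  have h2 := hη.eq_one s h
  unfold etad; rw [h1, h2]; ring

lemma etad_eq_zero_large {η₀ : ℝ → ℝ} (hη : CutoffFun η₀) {s : ℝ} (h : 3/2 ≤ |s|) :
    etad η₀ s = 0 := by
  have h1 := hη.eq_zero (s/2) (by rw [abs_div]; simp only [abs_two]; linarith)
  have h2 := hη.eq_zero s (by linarith)
  unfold etad; rw [h1, h2]; ring

def etad' (η₀ : ℝ → ℝ) (s : ℝ) : ℝ := deriv η₀ (s / 2) * (1/2) - deriv η₀ s

lemma hasDerivAt_etad {η₀ : ℝ → ℝ} (hη : CutoffFun η₀) (s : ℝ) :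
    HasDerivAt (etad η₀) (etad' η₀ s) s := by
  have hd : Differentiable ℝ η₀ := hη.smooth.differentiable (by norm_num)
  have h1 : HasDerivAt (fun s : ℝ => η₀ (s / 2)) (deriv η₀ (s/2) * (1/2)) s :=
    (hd (s/2)).hasDerivAt.comp s ((hasDerivAt_id s).div_const 2)
  exact h1.sub (hd s).hasDerivAt

lemma continuous_etad' {η₀ : ℝ → ℝ} (hη : CutoffFun η₀) : Continuous (etad' η₀) := by
  have : Continuous (deriv η₀) := (hη.smooth.iterate_deriv 1).continuous
  unfold etad'; fun_prop

lemma deriv_eta0_zero {η₀ : ℝ → ℝ} (hη : CutoffFun η₀) {x : ℝ} (h : 3/4 < |x|) :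
    deriv η₀ x = 0 := by
  have hset : IsOpen {y : ℝ | 3/4 < |y|} := isOpen_lt continuous_const continuous_abs
  have hev : η₀ =ᶠ[nhds x] (fun _ => (0:ℝ)) :=
    Filter.eventuallyEq_of_mem (hset.mem_nhds h) (fun y hy => hη.eq_zero y (le_of_lt hy))
  rw [hev.deriv_eq]; simp

lemma exists_etad'_bound {η₀ : ℝ → ℝ} (hη : CutoffFun η₀) :
    ∃ M : ℝ, 0 ≤ M ∧ ∀ s, |etad' η₀ s| ≤ M := by
  obtain ⟨x, -, hx⟩ := isCompact_Icc.exists_isMaxOn (Set.nonempty_Icc.2 (by norm_num : (-2:ℝ) ≤ 2))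
    ((continuous_etad' hη).abs.continuousOn)
  refine ⟨|etad' η₀ x|, abs_nonneg _, fun s => ?_⟩
  rcases le_or_gt (|s|) 2 with h | h
  · exact isMaxOn_iff.1 hx s (Set.mem_Icc.2 ⟨by linarith [neg_abs_le s], by linarith [le_abs_self s]⟩)
  · have h1 : deriv η₀ (s/2) = 0 := deriv_eta0_zero hη (by rw [abs_div]; simp only [abs_two]; linarith)
    have h2 : deriv η₀ s = 0 := deriv_eta0_zero hη (by linarith)
    unfold etad'; rw [h1, h2]; simp [abs_nonneg]

lemma continuous_gfun {η₀ : ℝ → ℝ} (hη : CutoffFun η₀) (c : ℝ) :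
    Continuous (fun σ : ℝ => etad η₀ (c * σ) / bet σ) := by
  have h1 : Continuous (etad η₀) := by
    have := hη.smooth.continuous
    unfold etad; fun_prop
  have h2 := continuous_bet
  exact Continuous.div (by fun_prop) h2 (fun σ => (bet_pos σ).ne')

set_option maxHeartbeats 1000000 in
lemma term_bound {η₀ : ℝ → ℝ} (hη : CutoffFun η₀) {M : ℝ} (hM0 : 0 ≤ M)
    (hM : ∀ s, |etad' η₀ s| ≤ M) {A : ℝ} (hA : A ≠ 0) {j : ℤ} (hj : 0 < j) :
    |∫ σ in Set.Ioi (0:ℝ), Real.sin (A*σ) * (etad η₀ ((2:ℝ)^(-j) * σ) / bet σ)|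
      ≤ (6*M+12) * min (|A| * 2^j) ((|A| * 2^j)⁻¹) := by
  set c : ℝ := (2:ℝ)^(-j) with hc
  set a : ℝ := (2:ℝ)^(j-1) with ha
  set b : ℝ := (2:ℝ)^(j+1) with hb
  set g : ℝ → ℝ := fun σ => etad η₀ (c * σ) / bet σ with hg
  have hcpos : 0 < c := by positivity
  have hapos : 0 < a := by positivity
  have h2j : (0:ℝ) < 2^j := by positivity
  have hca : c * a = 1/2 := by
    rw [hc, ha, ← zpow_add₀ (two_ne_zero : (2:ℝ) ≠ 0), show -j + (j-1) = -1 by ring,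
      zpow_neg_one]
    norm_num
  have hcb : c * b = 2 := by
    rw [hc, hb, ← zpow_add₀ (two_ne_zero : (2:ℝ) ≠ 0), show -j + (j+1) = 1 by ring, zpow_one]
  have haj : a = 2^j / 2 := by
    rw [ha, zpow_sub₀ (two_ne_zero : (2:ℝ) ≠ 0), zpow_one]
  have hbj : b = 2^j * 2 := by
    rw [hb, zpow_add₀ (two_ne_zero : (2:ℝ) ≠ 0), zpow_one]
  have hab : a ≤ b := by rw [haj, hbj]; nlinarith
  have hcj : c = (2^j : ℝ)⁻¹ := by rw [hc, zpow_neg]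
  -- g vanishes off Ioc a b
  have hgzero : ∀ σ ∈ Set.Ioi (0:ℝ), σ ∉ Set.Ioc a b → g σ = 0 := by
    intro σ hσ hσ'
    have hσ0 : 0 < σ := hσ
    rcases not_and_or.1 (fun hh => hσ' ⟨hh.1, hh.2⟩) with h | h
    · push_neg at h
      have : c * σ ≤ 1/2 := by
        rw [← hca]; exact mul_le_mul_of_nonneg_left h hcpos.le
      rw [hg]; simp only
      rw [etad_eq_zero_small hη (by rw [abs_of_pos (by positivity)]; exact this), zero_div]
    · push_neg at h
      have : 2 ≤ c * σ := by
        rw [← hcb]; exact mul_le_mul_of_nonneg_left h.le hcpos.le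
      rw [hg]; simp only
      rw [etad_eq_zero_large hη (by rw [abs_of_pos (by positivity)]; linarith), zero_div]
  -- reduce to interval integral
  have hrestr : (∫ σ in Set.Ioi (0:ℝ), Real.sin (A*σ) * g σ)
      = ∫ σ in a..b, Real.sin (A*σ) * g σ := by
    rw [intervalIntegral.integral_of_le hab]
    rw [show (∫ σ in Set.Ioi (0:ℝ), Real.sin (A*σ) * g σ)
        = ∫ σ in Set.Ioi (0:ℝ), (Set.Ioc a b).indicator (fun σ => Real.sin (A*σ) * g σ) σ from ?_]
    · have hsub : Set.Ioc a b ⊆ Set.Ioi (0:ℝ) := fun x hx => lt_trans hapos hx.1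
      rw [MeasureTheory.setIntegral_indicator measurableSet_Ioc,
        Set.inter_eq_self_of_subset_right hsub]
    · refine MeasureTheory.setIntegral_congr_fun measurableSet_Ioi (fun σ hσ => ?_)
      by_cases hmem : σ ∈ Set.Ioc a b
      · rw [Set.indicator_of_mem hmem]
      · rw [Set.indicator_of_notMem hmem, hgzero σ hσ hmem, mul_zero]
  -- Bound 1
  have hbound1 : |∫ σ in a..b, Real.sin (A*σ) * g σ| ≤ 3 * (|A| * 2^j) := by
    have h := intervalIntegral.norm_integral_le_of_norm_le_const
      (C := 2 * |A|) (f := fun σ => Real.sin (A*σ) * g σ) (a := a) (b := b) ?_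
    · rw [Real.norm_eq_abs] at h
      have hba : |b - a| = (3/2) * 2^j := by
        rw [hbj, haj, abs_of_nonneg (by nlinarith)]; ring
      rw [hba] at h
      refine h.trans ?_
      nlinarith [abs_nonneg A]
    · intro σ hσ
      rw [Set.uIoc_of_le hab] at hσ
      have hσ0 : 0 < σ := lt_trans hapos hσ.1
      rw [Real.norm_eq_abs, abs_mul]
      have h1 : |Real.sin (A*σ)| ≤ |A| * σ := by
        calc |Real.sin (A*σ)| ≤ |A*σ| := Real.abs_sin_le_abs
          _ = |A| * σ := by rw [abs_mul, abs_of_pos hσ0]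
      have h2 : |g σ| ≤ 2/σ := by
        rw [hg]; simp only
        rw [abs_div, abs_of_pos (bet_pos σ)]
        have := half_abs_le_bet σ
        rw [abs_of_pos hσ0] at this
        rw [div_le_div_iff₀ (bet_pos σ) hσ0]
        nlinarith [abs_etad_le hη (c*σ)]
      calc |Real.sin (A*σ)| * |g σ| ≤ (|A| * σ) * (2/σ) :=
            mul_le_mul h1 h2 (abs_nonneg _) (by positivity)
        _ = 2 * |A| := by field_simp
  -- Bound 2 via integration by parts
  set g' : ℝ → ℝ := fun σ =>
    (etad' η₀ (c*σ) * c * bet σ - etad η₀ (c*σ) * (σ / (4 * bet σ))) / (bet σ)^2 with hg'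
  have hgderiv : ∀ σ : ℝ, HasDerivAt g (g' σ) σ := by
    intro σ
    have hnum : HasDerivAt (fun σ : ℝ => etad η₀ (c * σ)) (etad' η₀ (c*σ) * c) σ := by
      have hlin : HasDerivAt (fun σ : ℝ => c * σ) c σ := by
        simpa using (hasDerivAt_id σ).const_mul c
      have := (hasDerivAt_etad hη (c*σ)).comp σ hlin
      exact this
    exact hnum.div (hasDerivAt_bet σ) (bet_pos σ).ne'
  have hg'cont : Continuous g' := by
    have h1 : Continuous (etad' η₀) := continuous_etad' hη
    have h2 : Continuous (etad η₀) := by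
      have := hη.smooth.continuous; unfold etad; fun_prop
    have h3 := continuous_bet
    refine Continuous.div ?_ (h3.pow 2) (fun σ => pow_ne_zero 2 (bet_pos σ).ne')
    refine Continuous.sub (by fun_prop) ?_
    exact Continuous.mul (by fun_prop)
      (Continuous.div continuous_id (by fun_prop) (fun σ => mul_ne_zero (by norm_num) (bet_pos σ).ne'))
  have hbound2 : |∫ σ in a..b, Real.sin (A*σ) * g σ| ≤ (6*M+12) * (|A| * 2^j)⁻¹ := by
    have hu : ∀ x ∈ Set.uIcc a b, HasDerivAt (fun x => -Real.cos (A*x)/A) (Real.sin (A*x)) x := by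
      intro x _
      have h1 : HasDerivAt (fun x : ℝ => A * x) A x := by
        simpa using (hasDerivAt_id x).const_mul A
      have h2 := (Real.hasDerivAt_cos (A*x)).comp x h1
      have h3 := (h2.neg).div_const A
      refine HasDerivAt.congr_deriv h3 ?_
      field_simp [hA]
  -- IBP
    have hibp := intervalIntegral.integral_mul_deriv_eq_deriv_mul hu
      (fun x _ => hgderiv x)
      ((Real.continuous_sin.comp (continuous_const.mul continuous_id)).intervalIntegrable a b)
      (hg'cont.intervalIntegrable a b)
    have c2j : c * 2^j = 1 := by
      rw [hcj]; field_simp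
    have hga : g a = 0 := by
      rw [hg]; simp only
      rw [hca, etad_eq_zero_small hη (by rw [abs_of_nonneg] <;> norm_num), zero_div]
    have hgb : g b = 0 := by
      rw [hg]; simp only
      rw [hcb, etad_eq_zero_large hη (by rw [abs_of_nonneg] <;> norm_num), zero_div]
    have hkey : (∫ σ in a..b, Real.sin (A*σ) * g σ)
        = - ∫ σ in a..b, (-Real.cos (A*σ)/A) * g' σ := by
      have := hibp
      rw [hga, hgb] at this
      linarith [this]
    rw [hkey, abs_neg]
    have hb2 := intervalIntegral.norm_integral_le_of_norm_le_const
      (C := (4*M+8) * c^2 / |A|) (f := fun σ => (-Real.cos (A*σ)/A) * g' σ) (a:=a) (b:=b) ?_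
    · rw [Real.norm_eq_abs] at hb2
      have hba : |b - a| = (3/2) * 2^j := by
        rw [hbj, haj, abs_of_nonneg (by nlinarith)]; ring
      rw [hba] at hb2
      refine hb2.trans ?_
      have hAinv : (|A| * 2^j)⁻¹ = c / |A| := by
        rw [mul_inv, hcj]; ring
      have hc2 : c^2 * 2^j = c := by
        rw [sq, mul_assoc, c2j, mul_one]
      rw [hAinv]
      have heq : (4*M+8) * c^2 / |A| * ((3/2) * 2^j) = (6*M+12) * (c^2 * 2^j) / |A| := by
        ring
      rw [heq, hc2, mul_div_assoc]
    · intro σ hσ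
      rw [Set.uIoc_of_le hab] at hσ
      have hσ0 : 0 < σ := lt_trans hapos hσ.1
      have hb0 := bet_pos σ
      have hbet : 2^j/4 ≤ bet σ := by
        have h1 := half_abs_le_bet σ
        rw [abs_of_pos hσ0] at h1
        have h2 : a ≤ σ := hσ.1.le
        rw [haj] at h2
        linarith
      have habs : |g' σ| ≤ (4*M+8) * c^2 := by
        rw [hg']; simp only
        rw [abs_div, abs_pow, abs_of_pos hb0]
        have h1 : |etad' η₀ (c*σ)| ≤ M := hM _
        have h2 : |etad η₀ (c*σ)| ≤ 1 := abs_etad_le hη _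
        have h3 : |σ/(4*bet σ)| ≤ 1/2 := abs_betderiv_le σ
        have hnum : |etad' η₀ (c*σ) * c * bet σ - etad η₀ (c*σ) * (σ/(4*bet σ))|
            ≤ M * c * bet σ + 1/2 := by
          refine (abs_sub _ _).trans ?_
          have e1 : |etad' η₀ (c*σ) * c * bet σ| ≤ M * c * bet σ := by
            rw [abs_mul, abs_mul, abs_of_pos hcpos, abs_of_pos hb0]
            gcongr
          have e2 : |etad η₀ (c*σ) * (σ/(4*bet σ))| ≤ 1/2 := by
            rw [abs_mul]
            calc |etad η₀ (c*σ)| * |σ/(4*bet σ)| ≤ 1 * (1/2) :=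
              mul_le_mul h2 h3 (abs_nonneg _) (by linarith [abs_nonneg (etad η₀ (c*σ))])
              _ = 1/2 := by norm_num
          linarith
        have h4 : 1/4 ≤ c * bet σ := by
          have := mul_le_mul_of_nonneg_left hbet hcpos.le
          rw [show c * (2^j/4) = (c * 2^j)/4 by ring, c2j] at this
          linarith
        rw [div_le_iff₀ (by positivity)]
        refine hnum.trans ?_
        have hu0 : (0:ℝ) ≤ c * bet σ := by positivity
        have h5 : M * (c * bet σ) ≤ 4 * M * (c * bet σ)^2 := by
          nlinarith [mul_nonneg (mul_nonneg hM0 hu0) (by linarith : (0:ℝ) ≤ 4 * (c * bet σ) - 1)]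
        have h6 : (1:ℝ)/2 ≤ 8 * (c * bet σ)^2 := by nlinarith [h4]
        nlinarith [h5, h6]
      rw [Real.norm_eq_abs, abs_mul]
      have hcosA : |(-Real.cos (A*σ))/A| ≤ 1/|A| := by
        rw [abs_div, abs_neg]
        gcongr
        exact Real.abs_cos_le_one _
      calc |(-Real.cos (A*σ))/A| * |g' σ| ≤ (1/|A|) * ((4*M+8) * c^2) :=
            mul_le_mul hcosA habs (abs_nonneg _) (by positivity)
        _ = (4*M+8) * c^2 / |A| := by ring
  -- combine
  rw [hrestr]
  rcases le_total (|A| * 2^j) ((|A| * 2^j)⁻¹) with hmin | hmin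
  · rw [min_eq_left hmin]
    refine hbound1.trans ?_
    nlinarith [abs_nonneg A, mul_nonneg (abs_nonneg A) h2j.le]
  · rw [min_eq_right hmin]
    exact hbound2

lemma sum_pow_half_le (S : Finset ℕ) : ∑ k ∈ S, ((1:ℝ)/2)^k ≤ 2 := by
  have hs : Summable (fun k : ℕ => ((1:ℝ)/2)^k) :=
    summable_geometric_of_lt_one (by norm_num) (by norm_num)
  have h := Summable.sum_le_tsum S (fun k _ => by positivity) hs
  rw [tsum_geometric_of_lt_one (by norm_num) (by norm_num)] at h
  norm_num at h
  linarith

lemma sum_le_two {E : Finset ℤ} {g : ℤ → ℝ} (c : ℤ → ℕ)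
    (hinj : ∀ j ∈ E, ∀ j' ∈ E, c j = c j' → j = j')
    (hg : ∀ j ∈ E, g j ≤ (1/2:ℝ)^(c j)) : ∑ j ∈ E, g j ≤ 2 := by
  calc ∑ j ∈ E, g j ≤ ∑ j ∈ E, ((1:ℝ)/2)^(c j) := Finset.sum_le_sum hg
    _ = ∑ k ∈ E.image c, ((1:ℝ)/2)^k := (Finset.sum_image hinj).symm
    _ ≤ 2 := sum_pow_half_le _

lemma sum_min_le {t : ℝ} (ht : 0 < t) (E : Finset ℤ) :
    ∑ j ∈ E, min (t * 2^j) (t * 2^j)⁻¹ ≤ 4 := by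
  classical
  have hsplit := (Finset.sum_filter_add_sum_filter_not E (fun j => t * 2^j ≤ 1)
    (fun j => min (t * 2^j) (t * 2^j)⁻¹))
  set E1 := E.filter (fun j => t * 2^j ≤ 1) with hE1
  set E2 := E.filter (fun j => ¬ t * 2^j ≤ 1) with hE2
  have hb1 : ∑ j ∈ E1, min (t * 2^j) (t * 2^j)⁻¹ ≤ 2 := by
    rcases E1.eq_empty_or_nonempty with h | hne
    · rw [h]; simp
    · set J := E1.max' hne with hJ
      have hJmem : J ∈ E1 := E1.max'_mem hne
      have hJle : t * 2^J ≤ 1 := (Finset.mem_filter.1 hJmem).2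
      refine sum_le_two (fun j => (J - j).toNat) ?_ ?_
      · intro j hj j' hj' hc
        have h1 : j ≤ J := Finset.le_max' _ _ hj
        have h2 : j' ≤ J := Finset.le_max' _ _ hj'
        have hc' : (J - j).toNat = (J - j').toNat := hc
        omega
      · intro j hj
        have h1 : j ≤ J := Finset.le_max' _ _ hj
        have hn : (((J - j).toNat : ℤ)) = J - j := Int.toNat_of_nonneg (by omega)
        have hpow : (2:ℝ)^j * (2:ℝ)^((J - j).toNat) = 2^J := by
          rw [← zpow_natCast (2:ℝ) ((J - j).toNat), hn, ← zpow_add₀ (two_ne_zero)]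
          ring_nf
        refine (min_le_left _ _).trans ?_
        have h2 : (0:ℝ) < 2^((J - j).toNat) := by positivity
        rw [div_pow, one_pow, le_div_iff₀ h2]
        calc t * 2^j * 2^((J - j).toNat) = t * 2^J := by rw [mul_assoc, hpow]
          _ ≤ 1 := hJle
  have hb2 : ∑ j ∈ E2, min (t * 2^j) (t * 2^j)⁻¹ ≤ 2 := by
    rcases E2.eq_empty_or_nonempty with h | hne
    · rw [h]; simp
    · set J := E2.min' hne with hJ
      have hJmem : J ∈ E2 := E2.min'_mem hne
      have hJle : 1 < t * 2^J := lt_of_not_ge (Finset.mem_filter.1 hJmem).2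
      refine sum_le_two (fun j => (j - J).toNat) ?_ ?_
      · intro j hj j' hj' hc
        have h1 : J ≤ j := Finset.min'_le _ _ hj
        have h2 : J ≤ j' := Finset.min'_le _ _ hj'
        have hc' : (j - J).toNat = (j' - J).toNat := hc
        omega
      · intro j hj
        have h1 : J ≤ j := Finset.min'_le _ _ hj
        have hn : (((j - J).toNat : ℤ)) = j - J := Int.toNat_of_nonneg (by omega)
        have hpow : (2:ℝ)^J * (2:ℝ)^((j - J).toNat) = 2^j := by
          rw [← zpow_natCast (2:ℝ) ((j - J).toNat), hn, ← zpow_add₀ (two_ne_zero)]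
          ring_nf
        refine (min_le_right _ _).trans ?_
        have h2 : (0:ℝ) < 2^((j - J).toNat) := by positivity
        have h3 : (0:ℝ) < t * 2^j := by positivity
        show (t * 2^j)⁻¹ ≤ ((1:ℝ)/2)^((j - J).toNat)
        rw [div_pow, one_pow, one_div, inv_le_inv₀ h3 h2]
        nlinarith
  linarith [hsplit.symm]

theorem stmt9 (η₀ : ℝ → ℝ) (hη₀ : CutoffFun η₀) :
    ∃ C > 0,
      ∀ A : ℝ, ∀ E : Finset ℤ, (∀ j ∈ E, 0 < j) →
        |∑ j ∈ E, (2 : ℝ) ^ (-j) *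
            ∫ σ in Set.Ioi (0 : ℝ), Real.sin (A * σ) * chi1 η₀ j σ| ≤ C := by
  obtain ⟨M, hM0, hM⟩ := exists_etad'_bound hη₀
  refine ⟨4 * (6*M+12) + 1, by nlinarith, ?_⟩
  intro A E hE
  by_cases hA : A = 0
  · subst hA
    have hz : ∀ j ∈ E, (2 : ℝ) ^ (-j) *
        ∫ σ in Set.Ioi (0 : ℝ), Real.sin (0 * σ) * chi1 η₀ j σ = 0 := by
      intro j _
      simp
    rw [Finset.sum_congr rfl hz, Finset.sum_const, smul_zero, abs_zero]
    nlinarith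
  · have hterm : ∀ j ∈ E, (2 : ℝ) ^ (-j) *
        ∫ σ in Set.Ioi (0 : ℝ), Real.sin (A * σ) * chi1 η₀ j σ
        = ∫ σ in Set.Ioi (0:ℝ), Real.sin (A*σ) * (etad η₀ ((2:ℝ)^(-j) * σ) / bet σ) := by
      intro j _
      rw [← MeasureTheory.integral_const_mul]
      refine MeasureTheory.setIntegral_congr_fun measurableSet_Ioi (fun σ _ => ?_)
      simp only [chi1]
      have h1 : (2:ℝ)^(-j) * (2:ℝ)^j = 1 := by
        rw [← zpow_add₀ (two_ne_zero : (2:ℝ) ≠ 0)]; simp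
      calc (2:ℝ)^(-j) * (Real.sin (A*σ) * ((2:ℝ)^j * etad η₀ ((2:ℝ)^(-j) * σ) / bet σ))
          = ((2:ℝ)^(-j) * (2:ℝ)^j) * (Real.sin (A*σ) * (etad η₀ ((2:ℝ)^(-j) * σ) / bet σ)) := by
            ring
        _ = Real.sin (A*σ) * (etad η₀ ((2:ℝ)^(-j) * σ) / bet σ) := by rw [h1, one_mul]
    rw [Finset.sum_congr rfl hterm]
    have habs := Finset.abs_sum_le_sum_abs
      (fun j => ∫ σ in Set.Ioi (0:ℝ), Real.sin (A*σ) * (etad η₀ ((2:ℝ)^(-j) * σ) / bet σ)) E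
    refine habs.trans ?_
    have hstep : ∑ j ∈ E, |∫ σ in Set.Ioi (0:ℝ), Real.sin (A*σ) * (etad η₀ ((2:ℝ)^(-j) * σ) / bet σ)|
        ≤ ∑ j ∈ E, (6*M+12) * min (|A| * 2^j) ((|A| * 2^j)⁻¹) :=
      Finset.sum_le_sum (fun j hj => term_bound hη₀ hM0 hM hA (hE j hj))
    refine hstep.trans ?_
    rw [← Finset.mul_sum]
    have hsum := sum_min_le (abs_pos.2 hA) E
    calc (6*M+12) * (∑ j ∈ E, min (|A| * 2^j) ((|A| * 2^j)⁻¹))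
        ≤ (6*M+12) * 4 := mul_le_mul_of_nonneg_left hsum (by linarith)
      _ ≤ 4*(6*M+12)+1 := by linarith


end
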